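/- For every integer m > 1, every positive multiple of 3 satisfies D_m(n) < n. -/

import Mathlib

open Finset

/-- The Schemmel totient function: `L m 0 = 0`, `L m 1 = 1`, and for `n > 1`,
`L m n = ∏ p^(α-1) (p - m)` over the canonical factorization of `n` if every
prime divisor of `n` exceeds `m`, and `0` otherwise. -/
def L (m n : ℕ) : ℕ :=
  if n ≤ 1 then n
  else if ∀ p ∈ n.primeFactors, m < p then
    ∏ p ∈ n.primeFactors, p ^ (n.factorization p - 1) * (p - m)
  else 0

/-- `R m n` is the least positive `k` with `L_m^{(k)}(n) ∈ {0, 1}`. -/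
noncomputable def R (m n : ℕ) : ℕ :=
  sInf {k | 0 < k ∧ ((L m)^[k] n = 0 ∨ (L m)^[k] n = 1)}

/-- `H m n = L_m^{(R_m(n))}(n)`. -/
noncomputable def H (m n : ℕ) : ℕ := (L m)^[R m n] n

/-- `D m 1 = 0` and `D m n = ∑_{i=1}^{R_m(n)} L_m^{(i)}(n)` for `n > 1`. -/
noncomputable def D (m n : ℕ) : ℕ :=
  if n = 1 then 0 else ∑ i ∈ Finset.Icc 1 (R m n), (L m)^[i] n

/-!
For `m ≥ 3` the prime `3 ∣ n` kills `L m n`, so `D m n = 0`. For `m = 2` the factor `3` gives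
`3 * L 2 n ≤ n`, and `D 2 n = L 2 n + D 2 (L 2 n)`. If `3 ∣ L 2 n`, strong induction gives
`D 2 n < 2 * L 2 n < n`. Otherwise, unless `L 2 n = 1`, `n` has a prime factor `p ≡ 1 [MOD 3]`,
and `p - 2 ∣ L 2 n` has a prime factor `q ≡ 2 [MOD 3]`; then `q - 2` puts a factor `3` into
`L 2 (L 2 n) < L 2 n`, and induction gives `D 2 n < L 2 n + 2 * L 2 (L 2 n) < 3 * L 2 n ≤ n`.
-/

theorem one_lt_of_mem_primeFactors {n p : ℕ} (hp : p ∈ n.primeFactors) : 1 < n :=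
  (Nat.prime_of_mem_primeFactors hp).one_lt.trans_le (Nat.le_of_mem_primeFactors hp)

theorem L_of_le_one {m n : ℕ} (hn : n ≤ 1) : L m n = n := if_pos hn

theorem L_eq_prod {m n : ℕ} (hn : 1 < n) (h : ∀ p ∈ n.primeFactors, m < p) :
    L m n = ∏ p ∈ n.primeFactors, p ^ (n.factorization p - 1) * (p - m) := by
  rw [L, if_neg hn.not_ge, if_pos h]

theorem L_eq_zero_of_dvd {m n p : ℕ} (hp : p.Prime) (hpn : p ∣ n) (hpm : p ≤ m) :
    L m n = 0 := by
  obtain rfl | hn0 := eq_or_ne n 0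
  · exact L_of_le_one zero_le_one
  have hn : 1 < n := hp.one_lt.trans_le (Nat.le_of_dvd (Nat.pos_of_ne_zero hn0) hpn)
  rw [L, if_neg hn.not_ge,
    if_neg fun h => (h p (Nat.mem_primeFactors.2 ⟨hp, hpn, hn0⟩)).not_ge hpm]

theorem lt_of_mem_primeFactors_of_L_ne_zero {m n p : ℕ} (hL : L m n ≠ 0)
    (hp : p ∈ n.primeFactors) : m < p := by
  by_contra! h
  exact hL (L_eq_zero_of_dvd (Nat.prime_of_mem_primeFactors hp) (Nat.dvd_of_mem_primeFactors hp) h)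

theorem sub_dvd_L {m n p : ℕ} (hp : p ∈ n.primeFactors) : p - m ∣ L m n := by
  by_cases hL : L m n = 0
  · rw [hL]; exact dvd_zero _
  rw [L_eq_prod (one_lt_of_mem_primeFactors hp) fun _ => lt_of_mem_primeFactors_of_L_ne_zero hL]
  exact (dvd_mul_left _ _).trans (Finset.dvd_prod_of_mem _ hp)

theorem mul_L_le_sub_mul {m n p : ℕ} (hp : p ∈ n.primeFactors) : p * L m n ≤ (p - m) * n := by
  by_cases hL : L m n = 0
  · rw [hL, mul_zero]; exact Nat.zero_le _
  have hn := one_lt_of_mem_primeFactors hp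
  have hpow : ∀ q ∈ n.primeFactors, q ^ (n.factorization q - 1) * q = q ^ n.factorization q :=
    fun q hq => pow_sub_one_mul (Finsupp.mem_support_iff.mp hq) q
  rw [L_eq_prod hn fun _ => lt_of_mem_primeFactors_of_L_ne_zero hL,
    ← Finset.mul_prod_erase _ _ hp]
  conv_rhs =>
    rw [Nat.prod_primeFactors_pow_factorization (by omega : n ≠ 0),
      ← Finset.mul_prod_erase _ _ hp]
  calc p * (p ^ (n.factorization p - 1) * (p - m) *
        ∏ q ∈ n.primeFactors.erase p, q ^ (n.factorization q - 1) * (q - m))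
      = (p - m) * ((p ^ (n.factorization p - 1) * p) *
        ∏ q ∈ n.primeFactors.erase p, q ^ (n.factorization q - 1) * (q - m)) := by ring
    _ ≤ (p - m) *
        (p ^ n.factorization p * ∏ q ∈ n.primeFactors.erase p, q ^ n.factorization q) := by
      rw [hpow p hp]
      gcongr with q hq
      rw [← hpow q (Finset.mem_of_mem_erase hq)]
      exact Nat.mul_le_mul_left _ (Nat.sub_le q m)

theorem L_lt_self {m n : ℕ} (hm : 0 < m) (hn : 1 < n) : L m n < n := by
  obtain ⟨p, hp⟩ := Nat.nonempty_primeFactors.2 hn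
  by_cases hL : L m n = 0
  · omega
  have hmp := lt_of_mem_primeFactors_of_L_ne_zero hL hp
  have hsub : (p - m) * n < p * n := Nat.mul_lt_mul_of_pos_right (by omega) (by omega)
  exact Nat.lt_of_mul_lt_mul_left ((mul_L_le_sub_mul hp).trans_lt hsub)

theorem iterate_L_le_one {m n k : ℕ} (hm : 0 < m) (hnk : n ≤ k) : (L m)^[k] n ≤ 1 := by
  induction k generalizing n with
  | zero => exact hnk.trans zero_le_one
  | succ k ih =>
    rcases le_or_gt n 1 with hn | hn
    · rw [Function.iterate_fixed (L_of_le_one hn)]; exact hn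
    · rw [Function.iterate_succ_apply]
      exact ih (by have := L_lt_self hm hn; omega)

theorem R_eq_sInf (m n : ℕ) : R m n = sInf {k | 0 < k ∧ (L m)^[k] n ≤ 1} := by
  simp_rw [Nat.le_one_iff_eq_zero_or_eq_one]; rfl

theorem R_eq_one {m n : ℕ} (h : L m n ≤ 1) : R m n = 1 := by
  rw [R_eq_sInf]
  exact le_antisymm (Nat.sInf_le ⟨one_pos, h⟩) (le_csInf ⟨1, one_pos, h⟩ fun k hk => hk.1)

theorem R_eq_R_L_add_one {m n : ℕ} (hm : 0 < m) (h : 1 < L m n) : R m n = R m (L m n) + 1 := by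
  have hne : {k | 0 < k ∧ (L m)^[k] n ≤ 1}.Nonempty :=
    ⟨n + 1, n.succ_pos, iterate_L_le_one hm n.le_succ⟩
  rw [R_eq_sInf, R_eq_sInf, ← Nat.sInf_add (Nat.sInf_mem hne).1]
  congr 2
  ext k
  simp only [Set.mem_ofPred_eq, Function.iterate_succ_apply]
  refine ⟨fun ⟨_, hk⟩ => ⟨Nat.pos_of_ne_zero ?_, hk⟩,
    fun ⟨_, hk⟩ => ⟨k.succ_pos, hk⟩⟩
  rintro rfl
  exact h.not_ge hk

theorem D_one (m : ℕ) : D m 1 = 0 := if_pos rfl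

theorem D_eq_L_of_L_le_one {m n : ℕ} (hn : n ≠ 1) (h : L m n ≤ 1) : D m n = L m n := by
  rw [D, if_neg hn, R_eq_one h, Finset.Icc_self, Finset.sum_singleton, Function.iterate_one]

theorem D_zero (m : ℕ) : D m 0 = 0 := by
  have hL : L m 0 = 0 := L_of_le_one zero_le_one
  rw [D_eq_L_of_L_le_one zero_ne_one (hL.trans_le zero_le_one), hL]

theorem D_eq_L_add_D_L {m n : ℕ} (hm : 0 < m) (hn : n ≠ 1) : D m n = L m n + D m (L m n) := by
  rcases le_or_gt (L m n) 1 with h | h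
  · rcases Nat.le_one_iff_eq_zero_or_eq_one.1 h with h' | h' <;>
      simp only [D_eq_L_of_L_le_one hn h, h', D_zero, D_one, add_zero]
  rw [D, if_neg hn, R_eq_R_L_add_one hm h, D, if_neg h.ne', ← Finset.Ico_add_one_right_eq_Icc,
    ← Finset.Ico_add_one_right_eq_Icc, Finset.sum_eq_sum_Ico_succ_bot (by omega),
    ← Finset.sum_Ico_add', Function.iterate_one]
  simp only [Function.iterate_succ_apply]

theorem exists_prime_dvd_mod_three_eq_two {t : ℕ} (ht : t % 3 = 2) :
    ∃ q, q.Prime ∧ q ∣ t ∧ q % 3 = 2 := by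
  induction t using Nat.recOnMul with
  | zero => simp at ht
  | one => simp at ht
  | prime p hp => exact ⟨p, hp, dvd_rfl, ht⟩
  | mul a b iha ihb =>
    have hab : a % 3 = 2 ∨ b % 3 = 2 := by
      rw [Nat.mul_mod] at ht
      have := a.mod_lt three_pos
      have := b.mod_lt three_pos
      interval_cases a % 3 <;> interval_cases b % 3 <;> simp_all
    rcases hab with ha | hb
    · obtain ⟨q, hq, hqa, hq2⟩ := iha ha
      exact ⟨q, hq, hqa.mul_right b, hq2⟩
    · obtain ⟨q, hq, hqb, hq2⟩ := ihb hb
      exact ⟨q, hq, hqb.mul_left a, hq2⟩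

theorem three_dvd_L_two_of_mem_primeFactors {n q : ℕ} (hq : q ∈ n.primeFactors)
    (hq2 : q % 3 = 2) : 3 ∣ L 2 n :=
  (by omega : 3 ∣ q - 2).trans (sub_dvd_L hq)

theorem three_dvd_L_two_L_two {n : ℕ} (h3n : 3 ∣ n) (h3c : ¬3 ∣ L 2 n) (hc1 : L 2 n ≠ 1) :
    3 ∣ L 2 (L 2 n) := by
  have hc0 : L 2 n ≠ 0 := fun h => h3c (h ▸ dvd_zero 3)
  have hn0 : n ≠ 0 := by rintro rfl; exact hc0 (L_of_le_one zero_le_one)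
  obtain ⟨p, hp, hp3⟩ : ∃ p ∈ n.primeFactors, p ≠ 3 := by
    by_contra! h
    have hpf : n.primeFactors = {3} := Finset.eq_singleton_iff_unique_mem.2
      ⟨Nat.mem_primeFactors.2 ⟨Nat.prime_three, h3n, hn0⟩, h⟩
    have hc : L 2 n = 3 ^ (n.factorization 3 - 1) := by
      rw [L_eq_prod (by omega) fun q hq => by rw [h q hq]; norm_num, hpf, Finset.prod_singleton]
      norm_num
    obtain h0 | h0 := eq_or_ne (n.factorization 3 - 1) 0
    · exact hc1 (by rw [hc, h0, pow_zero])
    · exact h3c (hc ▸ dvd_pow_self 3 h0)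
  have hp2 : 2 < p := lt_of_mem_primeFactors_of_L_ne_zero hc0 hp
  have hp1 : p % 3 = 1 := by
    have hp0 : p % 3 ≠ 0 := fun h =>
      hp3 (((Nat.prime_of_mem_primeFactors hp).eq_one_or_self_of_dvd 3 (by omega)).resolve_left
        (by norm_num)).symm
    have : p % 3 ≠ 2 := fun h => h3c (three_dvd_L_two_of_mem_primeFactors hp h)
    omega
  obtain ⟨q, hq, hqp, hq2⟩ := exists_prime_dvd_mod_three_eq_two (by omega : (p - 2) % 3 = 2)
  exact three_dvd_L_two_of_mem_primeFactors
    (Nat.mem_primeFactors.2 ⟨hq, hqp.trans (sub_dvd_L hp), hc0⟩) hq2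

theorem D_two_lt_self_of_three_dvd {n : ℕ} (hn : 0 < n) (h3 : 3 ∣ n) : D 2 n < n := by
  induction n using Nat.strong_induction_on with
  | _ n ih =>
  have ih' : ∀ k < n, 3 ∣ k → D 2 k ≤ k := fun k hk h3k => by
    rcases k.eq_zero_or_pos with rfl | hk0
    · rw [D_zero]
    · exact (ih k hk hk0 h3k).le
  have hcn : 3 * L 2 n ≤ n := by
    simpa using mul_L_le_sub_mul (m := 2) (Nat.mem_primeFactors.2 ⟨Nat.prime_three, h3, hn.ne'⟩)
  rw [D_eq_L_add_D_L two_pos (by omega)]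
  by_cases h3c : 3 ∣ L 2 n
  · have := ih' (L 2 n) (by omega) h3c
    omega
  obtain hc1 | hc1 := eq_or_ne (L 2 n) 1
  · rw [hc1, D_one]
    omega
  have hc'c : L 2 (L 2 n) < L 2 n := L_lt_self two_pos (by omega)
  have := ih' _ (by omega) (three_dvd_L_two_L_two h3 h3c hc1)
  rw [D_eq_L_add_D_L two_pos hc1]
  omega

theorem Dm_deficient_of_three_dvd (m : ℕ) (hm : 1 < m) :
    ∀ n : ℕ, 0 < n → 3 ∣ n → D m n < n := by
  intro n hn h3
  obtain rfl | hm3 : m = 2 ∨ 3 ≤ m := by omega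
  · exact D_two_lt_self_of_three_dvd hn h3
  · rw [D_eq_L_add_D_L (by omega) (by omega), L_eq_zero_of_dvd Nat.prime_three h3 hm3, D_zero]
    exact hn
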